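/- arXiv:1110.0596 — 2 statements merged into one kernel-verified Lean document; each statement's English description precedes it below -/
import Mathlib

section
/- Let X be a compact metric space with metric d, let U₁, U₂ be X-valued random variables on a probability space (Ω,F,P) with laws μ₁, μ₂, and suppose there is a measurable map Ψ: Ω → Ω such that d(U₁(ω), U₂(Ψ(ω))) ≤ ε for P-almost every ω, for some constant ε > 0. Then K_ε(μ₁,μ₂) ≤ 2‖P − Ψ_*(P)‖_var, where K_ε(μ₁,μ₂) = sup{∫f dμ₁ − ∫g dμ₂ : f,g ∈ C_b(X), f(u₁) − g(u₂) ≤ d_ε(u₁,u₂) for all u₁,u₂ ∈ X}. -/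
open MeasureTheory

lemma integrable_of_bdd' {Ω : Type*} [MeasurableSpace Ω] {μ : Measure Ω} [IsFiniteMeasure μ]
    {φ : Ω → ℝ} (hm : Measurable φ) {c : ℝ} (hc : ∀ ω, |φ ω| ≤ c) : Integrable φ μ :=
  (integrable_const c).mono' hm.aestronglyMeasurable (Filter.Eventually.of_forall hc)

/-- If `d(U₁(ω), U₂(Ψ(ω))) ≤ ε` a.e., then the dual functional `K_ε(μ₁,μ₂)` is bounded by
twice the total variation distance between `P` and `Ψ_*(P)`. -/
theorem stmt1 {X Ω : Type*} [MetricSpace X] [CompactSpace X]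
    [MeasurableSpace X] [BorelSpace X] [MeasurableSpace Ω]
    (P : Measure Ω) [IsProbabilityMeasure P]
    (U₁ U₂ : Ω → X) (hU₁ : Measurable U₁) (hU₂ : Measurable U₂)
    (μ₁ μ₂ : Measure X) (hμ₁ : μ₁ = P.map U₁) (hμ₂ : μ₂ = P.map U₂)
    (Ψ : Ω → Ω) (hΨ : Measurable Ψ)
    (ε : ℝ) (hε : 0 < ε)
    (hae : ∀ᵐ ω ∂P, dist (U₁ ω) (U₂ (Ψ ω)) ≤ ε) :
    sSup {r : ℝ | ∃ f g : X → ℝ, Continuous f ∧ Continuous g ∧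
        (∀ u₁ u₂ : X, f u₁ - g u₂ ≤ (if ε < dist u₁ u₂ then (1 : ℝ) else 0)) ∧
        r = (∫ u, f u ∂μ₁) - ∫ u, g u ∂μ₂} ≤
      2 * sSup {r : ℝ | ∃ s : Set Ω, MeasurableSet s ∧
        r = |(P s).toReal - ((P.map Ψ) s).toReal|} := by
  set Q : Measure Ω := P.map Ψ with hQ
  have hQprob : IsProbabilityMeasure Q := Measure.isProbabilityMeasure_map hΨ.aemeasurable
  set T : ℝ := sSup {r : ℝ | ∃ s : Set Ω, MeasurableSet s ∧
      r = |(P s).toReal - (Q s).toReal|} with hTdef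
  -- basic facts about T
  have hbdd : BddAbove {r : ℝ | ∃ s : Set Ω, MeasurableSet s ∧
      r = |(P s).toReal - (Q s).toReal|} := by
    refine ⟨1, ?_⟩
    rintro r ⟨s, hs, rfl⟩
    have h1 : (P s).toReal ≤ 1 := by
      have := prob_le_one (μ := P) (s := s)
      simpa using ENNReal.toReal_mono (by simp) this
    have h2 : (Q s).toReal ≤ 1 := by
      have := prob_le_one (μ := Q) (s := s)
      simpa using ENNReal.toReal_mono (by simp) this
    have h3 : 0 ≤ (P s).toReal := ENNReal.toReal_nonneg
    have h4 : 0 ≤ (Q s).toReal := ENNReal.toReal_nonneg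
    rw [abs_le]; constructor <;> linarith
  have hTs : ∀ s : Set Ω, MeasurableSet s → |(P s).toReal - (Q s).toReal| ≤ T := by
    intro s hs
    exact le_csSup hbdd ⟨s, hs, rfl⟩
  have hT0 : 0 ≤ T := by
    have := hTs ∅ MeasurableSet.empty
    simp at this
    exact le_trans (abs_nonneg _) (hTs ∅ MeasurableSet.empty)
  refine Real.sSup_le ?_ (by linarith)
  rintro r ⟨f, g, hf, hg, hfg, rfl⟩
  -- nonemptiness
  have hΩne : Nonempty Ω := by
    rcases isEmpty_or_nonempty Ω with h | h
    · exfalso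
      have h1 : P Set.univ = 1 := measure_univ
      rw [Set.univ_eq_empty_iff.mpr h] at h1
      simp at h1
    · exact h
  have hXne : Nonempty X := ⟨U₁ hΩne.some⟩
  -- bound on f
  have hfr : BddAbove (Set.range f) := (isCompact_range hf).bddAbove
  set M : ℝ := sSup (Set.range f) with hMdef
  have hfM : ∀ u, f u ≤ M := fun u => le_csSup hfr ⟨u, rfl⟩
  have hgM : ∀ u, M - 1 ≤ g u := by
    intro u
    have : M ≤ g u + 1 := by
      refine csSup_le (Set.range_nonempty f) ?_
      rintro x ⟨u₁, rfl⟩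
      have := hfg u₁ u
      split at this <;> linarith
    linarith
  -- truncated g
  set g' : X → ℝ := fun u => min (g u) M with hg'def
  have hg'c : Continuous g' := hg.min continuous_const
  have hg'lb : ∀ u, M - 1 ≤ g' u := fun u => le_min (hgM u) (by linarith)
  have hg'ub : ∀ u, g' u ≤ M := fun u => min_le_right _ _
  have hfg' : ∀ u₁ u₂ : X, f u₁ - g' u₂ ≤ (if ε < dist u₁ u₂ then (1 : ℝ) else 0) := by
    intro u₁ u₂
    have h1 := hfg u₁ u₂
    have h2 : f u₁ - M ≤ 0 := by linarith [hfM u₁]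
    have h3 : (0:ℝ) ≤ (if ε < dist u₁ u₂ then (1 : ℝ) else 0) := by positivity
    rcases min_cases (g u₂) M with ⟨he, _⟩ | ⟨he, _⟩ <;>
      simp only [hg'def, he] <;> linarith
  -- probability measures
  have hμ₂prob : IsProbabilityMeasure μ₂ := by
    rw [hμ₂]; exact Measure.isProbabilityMeasure_map hU₂.aemeasurable
  have hμ₁prob : IsProbabilityMeasure μ₁ := by
    rw [hμ₁]; exact Measure.isProbabilityMeasure_map hU₁.aemeasurable
  -- integrability
  obtain ⟨C, hC⟩ := isCompact_univ.exists_bound_of_continuousOn hf.continuousOn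
  have hfb : ∀ u, |f u| ≤ C := fun u => hC u trivial
  have hg'b : ∀ u, |g' u| ≤ |M| + 1 := by
    intro u
    rw [abs_le]
    constructor
    · linarith [hg'lb u, neg_abs_le M]
    · linarith [hg'ub u, le_abs_self M]
  have hintf : Integrable f μ₁ := integrable_of_bdd' hf.measurable hfb
  have hintg : Integrable g μ₂ := by
    obtain ⟨D, hD⟩ := isCompact_univ.exists_bound_of_continuousOn hg.continuousOn
    exact integrable_of_bdd' hg.measurable (fun u => hD u trivial)
  have hintg' : Integrable g' μ₂ := integrable_of_bdd' hg'c.measurable hg'b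
  -- step 1 : r ≤ ∫ f dμ₁ - ∫ g' dμ₂
  have step1 : (∫ u, f u ∂μ₁) - ∫ u, g u ∂μ₂ ≤ (∫ u, f u ∂μ₁) - ∫ u, g' u ∂μ₂ := by
    have : ∫ u, g' u ∂μ₂ ≤ ∫ u, g u ∂μ₂ :=
      integral_mono hintg' hintg (fun u => min_le_left _ _)
    linarith
  -- push to Ω
  have hmap1 : ∫ u, f u ∂μ₁ = ∫ ω, f (U₁ ω) ∂P := by
    rw [hμ₁]
    exact integral_map hU₁.aemeasurable hf.aestronglyMeasurable
  have hmap2 : ∫ u, g' u ∂μ₂ = ∫ ω, g' (U₂ ω) ∂P := by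
    rw [hμ₂]
    exact integral_map hU₂.aemeasurable hg'c.aestronglyMeasurable
  -- intermediate bounded functions on Ω
  have hintfU : Integrable (fun ω => f (U₁ ω)) P :=
    integrable_of_bdd' (hf.measurable.comp hU₁) (fun ω => hfb _)
  have hintgU : Integrable (fun ω => g' (U₂ ω)) P :=
    integrable_of_bdd' (hg'c.measurable.comp hU₂) (fun ω => hg'b _)
  have hintgUΨ : Integrable (fun ω => g' (U₂ (Ψ ω))) P :=
    integrable_of_bdd' ((hg'c.measurable.comp hU₂).comp hΨ) (fun ω => hg'b _)
  -- step 2 : ∫ f∘U₁ dP ≤ ∫ g'∘U₂∘Ψ dP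
  have step2 : ∫ ω, f (U₁ ω) ∂P ≤ ∫ ω, g' (U₂ (Ψ ω)) ∂P := by
    refine integral_mono_ae hintfU hintgUΨ ?_
    filter_upwards [hae] with ω hω
    have := hfg' (U₁ ω) (U₂ (Ψ ω))
    rw [if_neg (not_lt.mpr hω)] at this
    linarith
  -- step 3 : change of variables for Ψ
  have hmap3 : ∫ ω, g' (U₂ (Ψ ω)) ∂P = ∫ ω, g' (U₂ ω) ∂Q := by
    rw [hQ, integral_map hΨ.aemeasurable]
    exact (hg'c.measurable.comp hU₂).aestronglyMeasurable
  -- now bound ∫ h dQ - ∫ h dP by T, with h = g' ∘ U₂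
  set h₀ : Ω → ℝ := fun ω => g' (U₂ ω) - (M - 1) with hh₀def
  have hh₀m : Measurable h₀ := (hg'c.measurable.comp hU₂).sub measurable_const
  have hh₀0 : ∀ ω, 0 ≤ h₀ ω := fun ω => by simp only [hh₀def]; linarith [hg'lb (U₂ ω)]
  have hh₀1 : ∀ ω, h₀ ω ≤ 1 := fun ω => by simp only [hh₀def]; linarith [hg'ub (U₂ ω)]
  have hh₀b : ∀ ω, |h₀ ω| ≤ 1 := fun ω => abs_le.mpr ⟨by linarith [hh₀0 ω], hh₀1 ω⟩
  have hintP : Integrable h₀ P := integrable_of_bdd' hh₀m hh₀b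
  have hintQ : Integrable h₀ Q := integrable_of_bdd' hh₀m hh₀b
  have hintgUQ : Integrable (fun ω => g' (U₂ ω)) Q :=
    integrable_of_bdd' (hg'c.measurable.comp hU₂) (fun ω => hg'b _)
  have hdiff : (∫ ω, g' (U₂ ω) ∂Q) - ∫ ω, g' (U₂ ω) ∂P = (∫ ω, h₀ ω ∂Q) - ∫ ω, h₀ ω ∂P := by
    have e1 : ∫ ω, h₀ ω ∂Q = (∫ ω, g' (U₂ ω) ∂Q) - (M - 1) := by
      have := integral_sub hintgUQ (integrable_const (μ := Q) (M - 1))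
      simpa using this
    have e2 : ∫ ω, h₀ ω ∂P = (∫ ω, g' (U₂ ω) ∂P) - (M - 1) := by
      have := integral_sub hintgU (integrable_const (μ := P) (M - 1))
      simpa using this
    rw [e1, e2]; ring
  -- Hahn decomposition for (Q, P) : on A, P ≤ Q; on Aᶜ, Q ≤ P
  obtain ⟨A, hA, hA1, hA2⟩ := hahn_decomposition (μ := Q) (ν := P)
  have hres1 : P.restrict A ≤ Q.restrict A := by
    refine Measure.le_iff.mpr (fun s hs => ?_)
    rw [Measure.restrict_apply hs, Measure.restrict_apply hs]
    exact hA1 _ (hs.inter hA) Set.inter_subset_right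
  have hres2 : Q.restrict Aᶜ ≤ P.restrict Aᶜ := by
    refine Measure.le_iff.mpr (fun s hs => ?_)
    rw [Measure.restrict_apply hs, Measure.restrict_apply hs]
    exact hA2 _ (hs.inter hA.compl) Set.inter_subset_right
  -- bound on A
  have hbA : (∫ ω in A, h₀ ω ∂Q) - ∫ ω in A, h₀ ω ∂P ≤ (Q A).toReal - (P A).toReal := by
    have key : ∫ ω in A, (1 - h₀ ω) ∂P ≤ ∫ ω in A, (1 - h₀ ω) ∂Q := by
      refine integral_mono_measure hres1 ?_ ?_
      · exact Filter.Eventually.of_forall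
          (fun ω => by show (0:ℝ) ≤ 1 - h₀ ω; linarith [hh₀1 ω])
      · refine (integrable_of_bdd' (φ := fun ω => 1 - h₀ ω)
          (measurable_const.sub hh₀m) (c := 1) ?_).restrict
        intro ω
        show |1 - h₀ ω| ≤ 1
        exact abs_le.mpr ⟨by linarith [hh₀1 ω], by linarith [hh₀0 ω]⟩
    have eP : ∫ ω in A, (1 - h₀ ω) ∂P = (P A).toReal - ∫ ω in A, h₀ ω ∂P := by
      rw [integral_sub (integrable_const _).restrict hintP.restrict]
      simp [Measure.restrict_apply_univ]
      rfl
    have eQ : ∫ ω in A, (1 - h₀ ω) ∂Q = (Q A).toReal - ∫ ω in A, h₀ ω ∂Q := by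
      rw [integral_sub (integrable_const _).restrict hintQ.restrict]
      simp [Measure.restrict_apply_univ]
      rfl
    rw [eP, eQ] at key
    linarith
  -- bound on Aᶜ
  have hbAc : ∫ ω in Aᶜ, h₀ ω ∂Q ≤ ∫ ω in Aᶜ, h₀ ω ∂P := by
    refine integral_mono_measure hres2 ?_ hintP.restrict
    exact Filter.Eventually.of_forall (fun ω => hh₀0 ω)
  -- combine
  have hsplitP : (∫ ω in A, h₀ ω ∂P) + ∫ ω in Aᶜ, h₀ ω ∂P = ∫ ω, h₀ ω ∂P :=
    integral_add_compl hA hintP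
  have hsplitQ : (∫ ω in A, h₀ ω ∂Q) + ∫ ω in Aᶜ, h₀ ω ∂Q = ∫ ω, h₀ ω ∂Q :=
    integral_add_compl hA hintQ
  have hTA : (Q A).toReal - (P A).toReal ≤ T := by
    have := hTs A hA
    calc (Q A).toReal - (P A).toReal ≤ |(P A).toReal - (Q A).toReal| := by
          rw [abs_sub_comm]; exact le_abs_self _
      _ ≤ T := this
  have final : (∫ ω, h₀ ω ∂Q) - ∫ ω, h₀ ω ∂P ≤ T := by
    rw [← hsplitP, ← hsplitQ]
    linarith
  calc (∫ u, f u ∂μ₁) - ∫ u, g u ∂μ₂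
      ≤ (∫ u, f u ∂μ₁) - ∫ u, g' u ∂μ₂ := step1
    _ = (∫ ω, f (U₁ ω) ∂P) - ∫ ω, g' (U₂ ω) ∂P := by rw [hmap1, hmap2]
    _ ≤ (∫ ω, g' (U₂ (Ψ ω)) ∂P) - ∫ ω, g' (U₂ ω) ∂P := by linarith
    _ = (∫ ω, g' (U₂ ω) ∂Q) - ∫ ω, g' (U₂ ω) ∂P := by rw [hmap3]
    _ = (∫ ω, h₀ ω ∂Q) - ∫ ω, h₀ ω ∂P := hdiff
    _ ≤ T := final
    _ ≤ 2 * T := by linarith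
end

section
/- Let X be a Banach space decomposed as X = E ⊕ F with E finite-dimensional, with projections P_E, P_F. Let λ be a probability measure on X with bounded support which is the product of its projections λ_E = (P_E)_*λ and λ_F = (P_F)_*λ, and suppose λ_E has a C¹-smooth density ρ with respect to Lebesgue measure on E. Let Ψ(u) = u + Φ(u), where Φ: X → E is C¹-smooth with ‖Φ(u)‖ ≤ κ and ‖Φ(u₁) − Φ(u₂)‖ ≤ κ‖u₁ − u₂‖ for all u, u₁, u₂ ∈ X. Then ‖λ − Ψ_*(λ)‖_var ≤ Cκ, where C > 0 does not depend on κ. -/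
open MeasureTheory

lemma det_row_bound {m : ℕ} (A : Fin m → Fin m → ℝ) :
    ‖(Matrix.detRowAlternating : (Fin m → ℝ) [⋀^Fin m]→ₗ[ℝ] ℝ).toMultilinearMap A‖ ≤
      (Nat.factorial m : ℝ) * ∏ i, ‖A i‖ := by
  have h : (Matrix.detRowAlternating : (Fin m → ℝ) [⋀^Fin m]→ₗ[ℝ] ℝ).toMultilinearMap A
      = Matrix.det (Matrix.of A) := rfl
  rw [h, Real.norm_eq_abs, Matrix.det_apply]
  calc |∑ σ : Equiv.Perm (Fin m), Equiv.Perm.sign σ • ∏ i, Matrix.of A (σ i) i|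
      ≤ ∑ σ : Equiv.Perm (Fin m), |Equiv.Perm.sign σ • ∏ i, Matrix.of A (σ i) i| :=
        Finset.abs_sum_le_sum_abs _ _
    _ ≤ ∑ _σ : Equiv.Perm (Fin m), ∏ i, ‖A i‖ := by
        apply Finset.sum_le_sum
        intro σ _
        have h1 : |Equiv.Perm.sign σ • ∏ i, Matrix.of A (σ i) i| = |∏ i, A (σ i) i| := by
          rcases Int.units_eq_one_or (Equiv.Perm.sign σ) with h | h <;> simp [h]
        rw [h1, Finset.abs_prod]
        calc ∏ i, |A (σ i) i| ≤ ∏ i, ‖A (σ i)‖ :=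
              Finset.prod_le_prod (fun i _ => abs_nonneg _)
                (fun i _ => norm_le_pi_norm (A (σ i)) i)
          _ = ∏ i, ‖A i‖ := Equiv.prod_comp σ (fun i => ‖A i‖)
    _ = (Nat.factorial m : ℝ) * ∏ i, ‖A i‖ := by
        rw [Finset.sum_const, Finset.card_univ, Fintype.card_perm, nsmul_eq_mul, Fintype.card_fin]

lemma exists_det_bound (E : Type*) [NormedAddCommGroup E] [NormedSpace ℝ E]
    [FiniteDimensional ℝ E] :
    ∃ K : ℝ, 0 ≤ K ∧ ∀ D : E →L[ℝ] E, ‖D‖ ≤ 1 →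
      |(ContinuousLinearMap.id ℝ E + D).det - 1| ≤ K * ‖D‖ := by
  classical
  set m := Module.finrank ℝ E with hm
  let b : Module.Basis (Fin m) ℝ E := Module.finBasis ℝ E
  let ψ : (E →L[ℝ] E) →ₗ[ℝ] (Fin m → Fin m → ℝ) :=
  { toFun := fun D i j => b.repr (D (b j)) i
    map_add' := by intros x y; funext i j; simp
    map_smul' := by intros c x; funext i j; simp }
  have hψdet : ∀ L : E →L[ℝ] E, Matrix.det (Matrix.of (ψ L)) = L.det := by
    intro L
    have : Matrix.of (ψ L) = LinearMap.toMatrix b b (L : E →ₗ[ℝ] E) := by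
      ext i j
      simp [ψ, LinearMap.toMatrix_apply]
    rw [this, LinearMap.det_toMatrix]
  let ψc := LinearMap.toContinuousLinearMap ψ
  set K₁ := ‖ψc‖ with hK₁
  have hψle : ∀ D : E →L[ℝ] E, ‖ψ D‖ ≤ K₁ * ‖D‖ := fun D => ψc.le_opNorm D
  set b₀ := ‖ψ (ContinuousLinearMap.id ℝ E)‖ + K₁ with hb₀
  have hK₁0 : 0 ≤ K₁ := hK₁ ▸ norm_nonneg ψc
  have hb₀0 : 0 ≤ b₀ := add_nonneg (norm_nonneg _) hK₁0
  refine ⟨(Nat.factorial m : ℝ) * m * b₀ ^ (m - 1) * K₁, mul_nonneg (mul_nonneg (mul_nonneg (by positivity) (by positivity)) (pow_nonneg hb₀0 _)) hK₁0, ?_⟩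
  intro D hD
  have key := ((Matrix.detRowAlternating : (Fin m → ℝ) [⋀^Fin m]→ₗ[ℝ] ℝ).toMultilinearMap).norm_image_sub_le_of_bound
    (C := (Nat.factorial m : ℝ)) (by positivity) (fun A => det_row_bound A)
    (ψ (ContinuousLinearMap.id ℝ E + D)) (ψ (ContinuousLinearMap.id ℝ E))
  have h1 : (Matrix.detRowAlternating : (Fin m → ℝ) [⋀^Fin m]→ₗ[ℝ] ℝ).toMultilinearMap
      (ψ (ContinuousLinearMap.id ℝ E + D)) = (ContinuousLinearMap.id ℝ E + D).det :=
    hψdet _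
  have h2 : (Matrix.detRowAlternating : (Fin m → ℝ) [⋀^Fin m]→ₗ[ℝ] ℝ).toMultilinearMap
      (ψ (ContinuousLinearMap.id ℝ E)) = (1 : ℝ) := by
    have := hψdet (ContinuousLinearMap.id ℝ E)
    rw [show ((ContinuousLinearMap.id ℝ E).det) = 1 by
      simp [ContinuousLinearMap.det]] at this
    exact this
  rw [h1, h2] at key
  rw [← Real.norm_eq_abs]
  have hsub : ψ (ContinuousLinearMap.id ℝ E + D) - ψ (ContinuousLinearMap.id ℝ E) = ψ D := by
    rw [← map_sub]; congr 1; abel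
  rw [hsub] at key
  have hmax : max ‖ψ (ContinuousLinearMap.id ℝ E + D)‖ ‖ψ (ContinuousLinearMap.id ℝ E)‖ ≤ b₀ := by
    apply max_le
    · calc ‖ψ (ContinuousLinearMap.id ℝ E + D)‖
          = ‖ψ (ContinuousLinearMap.id ℝ E) + ψ D‖ := by rw [← map_add]
        _ ≤ ‖ψ (ContinuousLinearMap.id ℝ E)‖ + ‖ψ D‖ := norm_add_le _ _
        _ ≤ ‖ψ (ContinuousLinearMap.id ℝ E)‖ + K₁ * ‖D‖ := by linarith [hψle D]
        _ ≤ b₀ := by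
            nlinarith [hψle D, norm_nonneg D]
    · exact le_add_of_nonneg_right hK₁0
  calc ‖(ContinuousLinearMap.id ℝ E + D).det - 1‖
      ≤ (Nat.factorial m : ℝ) * (Fintype.card (Fin m)) *
        max ‖ψ (ContinuousLinearMap.id ℝ E + D)‖ ‖ψ (ContinuousLinearMap.id ℝ E)‖ ^
          (Fintype.card (Fin m) - 1) * ‖ψ D‖ := key
    _ ≤ (Nat.factorial m : ℝ) * m * b₀ ^ (m - 1) * (K₁ * ‖D‖) := by
        rw [Fintype.card_fin]
        apply mul_le_mul
        · apply mul_le_mul_of_nonneg_left _ (by positivity)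
          exact pow_le_pow_left₀ (le_trans (norm_nonneg _) (le_max_right _ _)) hmax _
        · exact hψle D
        · exact norm_nonneg _
        · exact mul_nonneg (mul_nonneg (by positivity) (by positivity)) (pow_nonneg hb₀0 _)
    _ = (Nat.factorial m : ℝ) * m * b₀ ^ (m - 1) * K₁ * ‖D‖ := by ring

lemma aux_var {E : Type*} [NormedAddCommGroup E] [NormedSpace ℝ E] [FiniteDimensional ℝ E]
    [MeasurableSpace E] [BorelSpace E]
    (lebE : Measure E) [lebE.IsAddHaarMeasure]
    (ρ : E → ℝ) (hρc : Continuous ρ) (hρnn : ∀ v, 0 ≤ ρ v)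
    (M Lρ R K : ℝ) (hM : ∀ v, ρ v ≤ M) (hM0 : 0 ≤ M)
    (hLρ : ∀ x y : E, |ρ x - ρ y| ≤ Lρ * ‖x - y‖) (hLρ0 : 0 ≤ Lρ)
    (hR : 0 < R) (hρ0 : ∀ v : E, R < ‖v‖ → ρ v = 0)
    (hK : 0 ≤ K)
    (hdet : ∀ D : E →L[ℝ] E, ‖D‖ ≤ 1 → |(ContinuousLinearMap.id ℝ E + D).det - 1| ≤ K * ‖D‖)
    (κ : ℝ) (hκ0 : 0 ≤ κ) (hκ1 : κ ≤ 1/2)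
    (φ : E → E) (hφd : ContDiff ℝ 1 φ)
    (hφb : ∀ v, ‖φ v‖ ≤ κ) (hφl : ∀ x y : E, ‖φ x - φ y‖ ≤ κ * ‖x - y‖)
    (A : Set E) (hA : MeasurableSet A) :
    |(∫ v in A, ρ v ∂lebE) - ∫ v in (fun v => v + φ v) ⁻¹' A, ρ v ∂lebE| ≤
      (((1 + K) * Lρ + K * M) * (lebE (Metric.closedBall 0 (R + 1))).toReal) * κ := by
  classical
  set T : E → E := fun v => v + φ v with hT
  -- integrability of ρ
  have hcs : HasCompactSupport ρ := by
    apply HasCompactSupport.intro (isCompact_closedBall (0 : E) R)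
    intro v hv
    exact hρ0 v (by simpa [Metric.mem_closedBall, dist_zero_right] using hv)
  have hρint : Integrable ρ lebE := hρc.integrable_of_hasCompactSupport hcs
  -- Lipschitz property of φ
  have hφlip : LipschitzWith ⟨κ, hκ0⟩ φ := by
    apply LipschitzWith.of_dist_le_mul
    intro x y
    rw [dist_eq_norm, dist_eq_norm]; exact hφl x y
  have hφdiff : Differentiable ℝ φ := hφd.differentiable one_ne_zero
  set D : E → (E →L[ℝ] E) := fun v => fderiv ℝ φ v with hD
  have hDle : ∀ v, ‖D v‖ ≤ κ := by
    intro v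
    exact norm_fderiv_le_of_lipschitz ℝ hφlip (x₀ := v)
  set T' : E → (E →L[ℝ] E) := fun v => ContinuousLinearMap.id ℝ E + D v with hT'
  have hT'd : ∀ v, HasFDerivAt T (T' v) v := by
    intro v
    exact (hasFDerivAt_id v).add (hφdiff v).hasFDerivAt
  have hTc : Continuous T := continuous_id.add hφd.continuous
  have hTm : Measurable T := hTc.measurable
  -- injectivity
  have hTinj : Function.Injective T := by
    intro a b hab
    have h1 : a - b = φ b - φ a := by
      rw [sub_eq_sub_iff_add_eq_add]
      simpa [add_comm] using hab
    have h2 : ‖a - b‖ ≤ κ * ‖a - b‖ := by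
      calc ‖a - b‖ = ‖φ b - φ a‖ := by rw [h1]
        _ ≤ κ * ‖b - a‖ := hφl b a
        _ = κ * ‖a - b‖ := by rw [norm_sub_rev]
    have h3 : ‖a - b‖ = 0 := by nlinarith [norm_nonneg (a - b)]
    exact sub_eq_zero.mp (norm_eq_zero.mp h3)
  -- surjectivity
  have hTsurj : Function.Surjective T := by
    intro y
    have hg : LipschitzWith ⟨κ, hκ0⟩ (fun v => y - φ v) := by
      apply LipschitzWith.of_dist_le_mul
      intro a b
      rw [dist_eq_norm, dist_eq_norm]
      calc ‖y - φ a - (y - φ b)‖ = ‖φ b - φ a‖ := by rw [sub_sub_sub_cancel_left]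
        _ ≤ κ * ‖b - a‖ := hφl b a
        _ = (⟨κ, hκ0⟩ : NNReal) * ‖a - b‖ := by rw [norm_sub_rev]
    have hc : ContractingWith ⟨κ, hκ0⟩ (fun v => y - φ v) := by
      refine ⟨?_, hg⟩
      have : κ < 1 := by linarith
      exact_mod_cast this
    have : Nonempty E := ⟨0⟩
    obtain ⟨x, hx⟩ := hc.exists_fixedPoint 0 (by simp [edist_ne_top])
    refine ⟨x, ?_⟩
    have hfix : y - φ x = x := hx.1
    show x + φ x = y
    nth_rewrite 1 [← hfix]
    abel
  -- determinant bounds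
  have hKκ : K * κ ≤ K := by nlinarith
  have hdet1 : ∀ v, |(T' v).det - 1| ≤ K * κ := by
    intro v
    calc |(T' v).det - 1| ≤ K * ‖D v‖ := hdet (D v) ((hDle v).trans (by linarith))
      _ ≤ K * κ := mul_le_mul_of_nonneg_left (hDle v) hK
  have hdet2 : ∀ v, |(T' v).det| ≤ 1 + K := by
    intro v
    have h1 := hdet1 v
    have h2 : |(T' v).det| - |(1:ℝ)| ≤ |(T' v).det - 1| := abs_sub_abs_le_abs_sub _ _
    rw [abs_one] at h2
    linarith
  -- change of variables
  have hCoV : ∫ v in A, ρ v ∂lebE = ∫ v, |(T' v).det| * (A.indicator ρ (T v)) ∂lebE := by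
    have h0 := integral_image_eq_integral_abs_det_fderiv_smul lebE MeasurableSet.univ
      (fun x _ => (hT'd x).hasFDerivWithinAt) (hTinj.injOn) (A.indicator ρ)
    rw [Set.image_univ, hTsurj.range_eq, Measure.restrict_univ] at h0
    rw [← integral_indicator hA, h0]
    simp_rw [smul_eq_mul]
  have hg₂eq : ∫ v in T ⁻¹' A, ρ v ∂lebE = ∫ v, (T ⁻¹' A).indicator ρ v ∂lebE :=
    (integral_indicator (hA.preimage hTm)).symm
  set g₁ : E → ℝ := fun v => |(T' v).det| * A.indicator ρ (T v) with hg₁def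
  set g₂ : E → ℝ := fun v => (T ⁻¹' A).indicator ρ v with hg₂def
  -- measurability
  have hT'c : Continuous T' := continuous_const.add (hφd.continuous_fderiv one_ne_zero)
  have hdetc : Continuous fun v => |(T' v).det| :=
    (ContinuousLinearMap.continuous_det.comp hT'c).abs
  have hg₁m : AEStronglyMeasurable g₁ lebE :=
    ((hdetc.measurable).mul ((hρc.measurable.indicator hA).comp hTm)).aestronglyMeasurable
  -- outside the big ball everything vanishes
  have hout : ∀ v : E, ¬(‖v‖ ≤ R + 1) → ρ v = 0 ∧ ρ (T v) = 0 := by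
    intro v hv
    push_neg at hv
    constructor
    · exact hρ0 v (by linarith)
    · apply hρ0
      have h1 : ‖v‖ ≤ ‖T v‖ + ‖φ v‖ := by
        calc ‖v‖ = ‖T v - φ v‖ := by simp [hT]
          _ ≤ ‖T v‖ + ‖φ v‖ := norm_sub_le _ _
      have := hφb v
      linarith
  have hindTA : ∀ v : E, ¬(‖v‖ ≤ R + 1) → A.indicator ρ (T v) = 0 := by
    intro v hv
    by_cases h : T v ∈ A
    · rw [Set.indicator_of_mem h, (hout v hv).2]
    · rw [Set.indicator_of_notMem h]
  -- integrability
  set B : E → ℝ := (Metric.closedBall (0:E) (R+1)).indicator (fun _ => (1+K)*M) with hBdef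
  have hball : MeasurableSet (Metric.closedBall (0:E) (R+1)) := measurableSet_closedBall
  have hBint : Integrable B lebE := by
    rw [hBdef, integrable_indicator_iff hball]
    exact integrableOn_const measure_closedBall_lt_top.ne
  have hg₁b : ∀ v, ‖g₁ v‖ ≤ B v := by
    intro v
    by_cases hv : ‖v‖ ≤ R + 1
    · have hvmem : v ∈ Metric.closedBall (0:E) (R+1) := by
        simpa [Metric.mem_closedBall, dist_zero_right] using hv
      rw [hBdef, Set.indicator_of_mem hvmem]
      have h1 : A.indicator ρ (T v) ≤ M :=
        Set.indicator_apply_le' (fun _ => hM _) (fun _ => hM0)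
      have h2 : 0 ≤ A.indicator ρ (T v) := Set.indicator_nonneg (fun x _ => hρnn x) _
      rw [Real.norm_eq_abs, abs_mul, abs_abs, abs_of_nonneg h2]
      have := hdet2 v
      nlinarith [abs_nonneg ((T' v).det)]
    · have hz := hindTA v hv
      have hvnm : v ∉ Metric.closedBall (0:E) (R+1) := by
        simpa [Metric.mem_closedBall, dist_zero_right] using hv
      rw [hBdef, Set.indicator_of_notMem hvnm]
      simp [hg₁def, hz]
  have hg₁int : Integrable g₁ lebE := hBint.mono' hg₁m (Filter.Eventually.of_forall hg₁b)
  have hg₂int : Integrable g₂ lebE := hρint.indicator (hA.preimage hTm)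
  -- pointwise bound on the difference
  set c₁ : ℝ := ((1 + K) * Lρ + K * M) * κ with hc₁def
  have hc₁0 : 0 ≤ c₁ := by
    apply mul_nonneg _ hκ0
    nlinarith
  have hpt : ∀ v, |g₁ v - g₂ v| ≤
      (Metric.closedBall (0:E) (R+1)).indicator (fun _ => c₁) v := by
    intro v
    by_cases hmem : T v ∈ A
    · have e₁ : g₁ v = |(T' v).det| * ρ (T v) := by
        simp only [hg₁def, Set.indicator_of_mem hmem]
      have e₂ : g₂ v = ρ v := by
        simp only [hg₂def]
        exact Set.indicator_of_mem (Set.mem_preimage.mpr hmem) ρ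
      by_cases hv : ‖v‖ ≤ R + 1
      · have hvmem : v ∈ Metric.closedBall (0:E) (R+1) := by
          simpa [Metric.mem_closedBall, dist_zero_right] using hv
        rw [Set.indicator_of_mem hvmem, e₁, e₂]
        have hTvv : T v - v = φ v := by simp [hT]
        have hlip : |ρ (T v) - ρ v| ≤ Lρ * κ := by
          calc |ρ (T v) - ρ v| ≤ Lρ * ‖T v - v‖ := hLρ _ _
            _ = Lρ * ‖φ v‖ := by rw [hTvv]
            _ ≤ Lρ * κ := mul_le_mul_of_nonneg_left (hφb v) hLρ0
        set a : ℝ := |(T' v).det| with hadef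
        have ha0 : (0:ℝ) ≤ a := abs_nonneg _
        have hd1 : |a - 1| ≤ K * κ := by
          have h1 : |a - abs (1:ℝ)| ≤ |(T' v).det - 1| := abs_abs_sub_abs_le_abs_sub _ _
          rw [abs_one] at h1
          exact h1.trans (hdet1 v)
        have hd2 : a ≤ 1 + K := hdet2 v
        have u1 : |a * (ρ (T v) - ρ v)| ≤ (1 + K) * (Lρ * κ) := by
          rw [abs_mul, abs_of_nonneg ha0]
          exact mul_le_mul hd2 hlip (abs_nonneg _) (by linarith)
        have u2 : |(a - 1) * ρ v| ≤ (K * κ) * M := by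
          rw [abs_mul, abs_of_nonneg (hρnn v)]
          exact mul_le_mul hd1 (hM v) (hρnn v) (by positivity)
        have key : a * ρ (T v) - ρ v = a * (ρ (T v) - ρ v) + (a - 1) * ρ v := by ring
        rw [hc₁def, key]
        have habs := abs_add_le (a * (ρ (T v) - ρ v)) ((a - 1) * ρ v)
        have hfin : (1 + K) * (Lρ * κ) + (K * κ) * M = ((1 + K) * Lρ + K * M) * κ := by ring
        linarith
      · have hvnm : v ∉ Metric.closedBall (0:E) (R+1) := by
          simpa [Metric.mem_closedBall, dist_zero_right] using hv
        rw [Set.indicator_of_notMem hvnm, e₁, e₂, (hout v hv).1, (hout v hv).2]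
        simp
    · have e₁ : g₁ v = 0 := by
        simp only [hg₁def, Set.indicator_of_notMem hmem, mul_zero]
      have e₂ : g₂ v = 0 := by
        simp only [hg₂def]
        exact Set.indicator_of_notMem (fun h => hmem (Set.mem_preimage.mp h)) ρ
      rw [e₁, e₂]
      simpa using Set.indicator_nonneg (fun x _ => hc₁0) v
  have hIint : Integrable ((Metric.closedBall (0:E) (R+1)).indicator (fun _ => c₁)) lebE := by
    rw [integrable_indicator_iff hball]
    exact integrableOn_const measure_closedBall_lt_top.ne
  -- final computation
  rw [hCoV, hg₂eq]
  have hsub : (∫ v, g₁ v ∂lebE) - (∫ v, g₂ v ∂lebE) = ∫ v, (g₁ v - g₂ v) ∂lebE :=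
    (integral_sub hg₁int hg₂int).symm
  rw [hsub]
  calc |∫ v, (g₁ v - g₂ v) ∂lebE| ≤ ∫ v, |g₁ v - g₂ v| ∂lebE := by
        simpa [Real.norm_eq_abs] using norm_integral_le_integral_norm (μ := lebE) (fun v => g₁ v - g₂ v)
    _ ≤ ∫ v, (Metric.closedBall (0:E) (R+1)).indicator (fun _ => c₁) v ∂lebE :=
        integral_mono (hg₁int.sub hg₂int).abs hIint hpt
    _ = (lebE (Metric.closedBall (0:E) (R+1))).toReal • c₁ := integral_indicator_const _ hball
    _ = (((1 + K) * Lρ + K * M) * (lebE (Metric.closedBall 0 (R + 1))).toReal) * κ := by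
        rw [smul_eq_mul, hc₁def]; ring

/-- Image of a measure under a finite-dimensional transformation: if `λ` on `X = E × F`
(`E` finite-dimensional) is the product of its projections, has bounded support, and its
`E`-marginal has a `C¹` density `ρ` w.r.t. Lebesgue (Haar) measure on `E`, then for any
`C¹` map `Φ : X → E` with `‖Φ‖ ≤ κ` and Lipschitz constant `κ`, the total variation
distance between `λ` and its image under `Ψ(u) = u + Φ(u)` is at most `Cκ`, where `C`
does not depend on `κ`. -/
theorem stmt18 {E F : Type*}
    [NormedAddCommGroup E] [NormedSpace ℝ E] [FiniteDimensional ℝ E]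
    [MeasurableSpace E] [BorelSpace E]
    [NormedAddCommGroup F] [NormedSpace ℝ F] [MeasurableSpace F] [BorelSpace F]
    (lebE : Measure E) [lebE.IsAddHaarMeasure]
    (lam : Measure (E × F)) [IsProbabilityMeasure lam]
    (hb : ∃ R : ℝ, 0 < R ∧ lam (Metric.closedBall 0 R) = 1)
    (hprod : lam = (lam.map Prod.fst).prod (lam.map Prod.snd))
    (ρ : E → ℝ) (hρ : ContDiff ℝ 1 ρ) (hρnn : ∀ v, 0 ≤ ρ v)
    (hdens : lam.map Prod.fst = lebE.withDensity (fun v => ENNReal.ofReal (ρ v))) :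
    ∃ C : ℝ, 0 < C ∧ ∀ κ : ℝ, 0 ≤ κ →
      ∀ Φ : E × F → E, ContDiff ℝ 1 Φ →
        (∀ u, ‖Φ u‖ ≤ κ) → (∀ u₁ u₂, ‖Φ u₁ - Φ u₂‖ ≤ κ * ‖u₁ - u₂‖) →
        ∀ s : Set (E × F), MeasurableSet s →
          |(lam s).toReal - ((lam.map (fun u : E × F => (u.1 + Φ u, u.2))) s).toReal| ≤
            C * κ := by
  classical
  obtain ⟨R, hR, hlamR⟩ := hb
  set μ : Measure E := lam.map Prod.fst with hμdef
  set ν : Measure F := lam.map Prod.snd with hνdef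
  have hμp : IsProbabilityMeasure μ := Measure.isProbabilityMeasure_map measurable_fst.aemeasurable
  have hνp : IsProbabilityMeasure ν := Measure.isProbabilityMeasure_map measurable_snd.aemeasurable
  have hρc : Continuous ρ := hρ.continuous
  -- the E-marginal lives on the ball of radius R
  have hμball : μ (Metric.closedBall 0 R) = 1 := by
    rw [hμdef, Measure.map_apply measurable_fst measurableSet_closedBall]
    refine le_antisymm prob_le_one ?_
    rw [← hlamR]
    apply measure_mono
    intro u hu
    simp only [Set.mem_preimage, Metric.mem_closedBall, dist_zero_right] at hu ⊢
    exact le_trans (norm_fst_le u) hu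
  -- ρ vanishes outside the ball of radius R
  have hρ0 : ∀ v : E, R < ‖v‖ → ρ v = 0 := by
    have hcompl : μ (Metric.closedBall (0:E) R)ᶜ = 0 :=
      (prob_compl_eq_zero_iff measurableSet_closedBall).mpr hμball
    rw [hdens, withDensity_apply _ measurableSet_closedBall.compl] at hcompl
    have hmeas : Measurable fun v => ENNReal.ofReal (ρ v) :=
      ENNReal.measurable_ofReal.comp hρc.measurable
    have hae : ∀ᵐ v ∂lebE, v ∈ (Metric.closedBall (0:E) R)ᶜ → ENNReal.ofReal (ρ v) = 0 := by
      rw [← ae_restrict_iff' measurableSet_closedBall.compl]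
      have := (lintegral_eq_zero_iff (hmeas)).mp hcompl
      filter_upwards [this] with v hv using hv
    intro x hx
    by_contra hne
    have hxpos : 0 < ρ x := lt_of_le_of_ne (hρnn x) (Ne.symm hne)
    set U : Set E := (Metric.closedBall (0:E) R)ᶜ ∩ ρ ⁻¹' Set.Ioi (ρ x / 2) with hUdef
    have hUopen : IsOpen U :=
      (Metric.isClosed_closedBall.isOpen_compl).inter (isOpen_Ioi.preimage hρc)
    have hxU : x ∈ U := by
      constructor
      · simp only [Set.mem_compl_iff, Metric.mem_closedBall, dist_zero_right, not_le]
        exact hx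
      · simp only [Set.mem_preimage, Set.mem_Ioi]
        linarith
    have hUpos : 0 < lebE U := hUopen.measure_pos lebE ⟨x, hxU⟩
    have hN0 : lebE {v | ¬ (v ∈ (Metric.closedBall (0:E) R)ᶜ → ENNReal.ofReal (ρ v) = 0)} = 0 := by
      have := hae
      rw [MeasureTheory.ae_iff] at this
      exact this
    have hUsub : U ⊆ {v | ¬ (v ∈ (Metric.closedBall (0:E) R)ᶜ → ENNReal.ofReal (ρ v) = 0)} := by
      intro v hv
      simp only [Set.mem_setOf_eq]
      intro h
      have hpos : 0 < ρ v := lt_trans (by linarith) hv.2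
      have := h hv.1
      rw [ENNReal.ofReal_eq_zero] at this
      linarith
    exact absurd (measure_mono_null hUsub hN0) (ne_of_gt hUpos)
  -- compact support, sup bound, Lipschitz bound for ρ
  have hcs : HasCompactSupport ρ := by
    apply HasCompactSupport.intro (isCompact_closedBall (0 : E) R)
    intro v hv
    exact hρ0 v (by simpa [Metric.mem_closedBall, dist_zero_right] using hv)
  have hρint : Integrable ρ lebE := hρc.integrable_of_hasCompactSupport hcs
  obtain ⟨M, hM₀⟩ := hcs.exists_bound_of_continuous hρc
  have hM : ∀ v, ρ v ≤ M := fun v =>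
    (le_abs_self _).trans (by simpa [Real.norm_eq_abs] using hM₀ v)
  have hM0 : 0 ≤ M := le_trans (hρnn 0) (hM 0)
  have hfc : Continuous (fderiv ℝ ρ) := hρ.continuous_fderiv one_ne_zero
  have hfcs : HasCompactSupport (fderiv ℝ ρ) := hcs.fderiv (𝕜 := ℝ)
  obtain ⟨Lρ, hLρb⟩ := hfcs.exists_bound_of_continuous hfc
  have hLρ0 : 0 ≤ Lρ := le_trans (norm_nonneg _) (hLρb 0)
  have hLρ : ∀ x y : E, |ρ x - ρ y| ≤ Lρ * ‖x - y‖ := by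
    intro x y
    rw [← Real.norm_eq_abs]
    exact Convex.norm_image_sub_le_of_norm_fderiv_le
      (fun z _ => (hρ.differentiable one_ne_zero).differentiableAt)
      (fun z _ => hLρb z) convex_univ (Set.mem_univ _) (Set.mem_univ _)
  obtain ⟨K, hK0, hdet⟩ := exists_det_bound E
  set lebBall : ℝ := (lebE (Metric.closedBall 0 (R + 1))).toReal with hlebdef
  have hleb0 : 0 ≤ lebBall := ENNReal.toReal_nonneg
  set c₀ : ℝ := ((1 + K) * Lρ + K * M) * lebBall with hc₀def
  have hc₀0 : 0 ≤ c₀ := mul_nonneg (by nlinarith) hleb0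
  refine ⟨c₀ + 2, by linarith, ?_⟩
  intro κ hκ0 Φ hΦ hΦb hΦl s hs
  set Ψ : E × F → E × F := fun u => (u.1 + Φ u, u.2) with hΨdef
  have hΨc : Continuous Ψ := (continuous_fst.add hΦ.continuous).prodMk continuous_snd
  have hΨm : Measurable Ψ := hΨc.measurable
  have hmapp : IsProbabilityMeasure (lam.map Ψ) := Measure.isProbabilityMeasure_map hΨm.aemeasurable
  have htoReal_le_one : ∀ (γ : Measure (E × F)) (_ : IsProbabilityMeasure γ) (t : Set (E × F)),
      (γ t).toReal ≤ 1 := by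
    intro γ hγ t
    have h1 : γ t ≤ 1 := prob_le_one
    have := ENNReal.toReal_mono ENNReal.one_ne_top h1
    simpa using this
  by_cases hκhalf : κ ≤ 1/2
  case neg =>
    push_neg at hκhalf
    have h1 : (lam s).toReal ≤ 1 := htoReal_le_one lam inferInstance s
    have h2 : ((lam.map Ψ) s).toReal ≤ 1 := htoReal_le_one _ hmapp s
    have h3 : (0:ℝ) ≤ (lam s).toReal := ENNReal.toReal_nonneg
    have h4 : (0:ℝ) ≤ ((lam.map Ψ) s).toReal := ENNReal.toReal_nonneg
    rw [abs_le]
    constructor <;> nlinarith [mul_nonneg hc₀0 hκ0]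
  case pos =>
    have hslice : ∀ t : Set (E × F), MeasurableSet t →
        lam t = ∫⁻ w, μ ((fun v => (v, w)) ⁻¹' t) ∂ν := by
      intro t ht
      conv_lhs => rw [hprod]
      exact Measure.prod_apply_symm ht
    have hs' : MeasurableSet (Ψ ⁻¹' s) := hΨm hs
    have hseteq : ∀ w : F, (fun v => (v, w)) ⁻¹' (Ψ ⁻¹' s) =
        (fun v => v + Φ (v, w)) ⁻¹' ((fun v => (v, w)) ⁻¹' s) := by
      intro w; ext v; simp [hΨdef, Set.mem_preimage]
    have h1 : lam s = ∫⁻ w, μ ((fun v => (v, w)) ⁻¹' s) ∂ν := hslice s hs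
    have h2 : (lam.map Ψ) s =
        ∫⁻ w, μ ((fun v => v + Φ (v, w)) ⁻¹' ((fun v => (v, w)) ⁻¹' s)) ∂ν := by
      rw [Measure.map_apply hΨm hs, hslice _ hs']
      simp only [hseteq]
    set a : F → ℝ := fun w => (μ ((fun v => (v, w)) ⁻¹' s)).toReal with hadef
    set b : F → ℝ := fun w =>
      (μ ((fun v => v + Φ (v, w)) ⁻¹' ((fun v => (v, w)) ⁻¹' s))).toReal with hbdef
    have hslicemeas : ∀ w : F, MeasurableSet ((fun v => (v, w)) ⁻¹' s) :=
      fun w => hs.preimage measurable_prodMk_right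
    have hameas : Measurable fun w => μ ((fun v => (v, w)) ⁻¹' s) :=
      measurable_measure_prodMk_right hs
    have hbmeas : Measurable fun w =>
        μ ((fun v => v + Φ (v, w)) ⁻¹' ((fun v => (v, w)) ⁻¹' s)) := by
      simp only [← hseteq]
      exact measurable_measure_prodMk_right hs'
    have hfin1 : ∀ᵐ w ∂ν, μ ((fun v => (v, w)) ⁻¹' s) < ⊤ :=
      Filter.Eventually.of_forall (fun w => lt_of_le_of_lt prob_le_one ENNReal.one_lt_top)
    have hfin2 : ∀ᵐ w ∂ν,
        μ ((fun v => v + Φ (v, w)) ⁻¹' ((fun v => (v, w)) ⁻¹' s)) < ⊤ :=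
      Filter.Eventually.of_forall (fun w => lt_of_le_of_lt prob_le_one ENNReal.one_lt_top)
    have ha' : ∫ w, a w ∂ν = (lam s).toReal := by
      rw [h1]; exact integral_toReal hameas.aemeasurable hfin1
    have hb' : ∫ w, b w ∂ν = ((lam.map Ψ) s).toReal := by
      rw [h2]; exact integral_toReal hbmeas.aemeasurable hfin2
    rw [← ha', ← hb']
    have hμint : ∀ B : Set E, MeasurableSet B → (μ B).toReal = ∫ v in B, ρ v ∂lebE := by
      intro B hB
      rw [hdens, withDensity_apply _ hB,
        ← ofReal_integral_eq_lintegral_ofReal (hρint.restrict) (Filter.Eventually.of_forall hρnn),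
        ENNReal.toReal_ofReal (integral_nonneg hρnn)]
    have hperw : ∀ w : F, |a w - b w| ≤ c₀ * κ := by
      intro w
      have hφd : ContDiff ℝ 1 (fun v : E => Φ (v, w)) :=
        hΦ.comp ((contDiff_id (E := E)).prodMk contDiff_const)
      have hφb' : ∀ v : E, ‖Φ (v, w)‖ ≤ κ := fun v => hΦb (v, w)
      have hφl' : ∀ x y : E, ‖Φ (x, w) - Φ (y, w)‖ ≤ κ * ‖x - y‖ := by
        intro x y
        have h := hΦl (x, w) (y, w)
        have hxy : ((x, w) : E × F) - (y, w) = (x - y, 0) := by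
          rw [Prod.mk_sub_mk, sub_self]
        rw [hxy, Prod.norm_def] at h
        simpa [norm_zero, max_eq_left (norm_nonneg (x - y))] using h
      have hkey := aux_var lebE ρ hρc hρnn M Lρ R K hM hM0 hLρ hLρ0 hR hρ0 hK0 hdet
        κ hκ0 hκhalf _ hφd hφb' hφl' _ (hslicemeas w)
      have hTm : Measurable fun v : E => v + Φ (v, w) :=
        (continuous_id.add (hΦ.continuous.comp (continuous_id.prodMk continuous_const))).measurable
      rw [hadef, hbdef]
      simp only []
      rw [hμint _ (hslicemeas w), hμint _ ((hslicemeas w).preimage hTm)]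
      calc |(∫ v in (fun v => (v, w)) ⁻¹' s, ρ v ∂lebE) -
            ∫ v in (fun v => v + Φ (v, w)) ⁻¹' ((fun v => (v, w)) ⁻¹' s), ρ v ∂lebE|
          ≤ (((1 + K) * Lρ + K * M) * (lebE (Metric.closedBall 0 (R + 1))).toReal) * κ := hkey
        _ = c₀ * κ := by rw [hc₀def, hlebdef]
    have haint : Integrable a ν := by
      refine (integrable_const (1:ℝ)).mono'
        (hameas.ennreal_toReal.aestronglyMeasurable) (Filter.Eventually.of_forall ?_)
      intro w
      rw [Real.norm_eq_abs, abs_of_nonneg ENNReal.toReal_nonneg]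
      have h1 : μ ((fun v => (v, w)) ⁻¹' s) ≤ 1 := prob_le_one
      simpa using ENNReal.toReal_mono ENNReal.one_ne_top h1
    have hbint : Integrable b ν := by
      refine (integrable_const (1:ℝ)).mono'
        (hbmeas.ennreal_toReal.aestronglyMeasurable) (Filter.Eventually.of_forall ?_)
      intro w
      rw [Real.norm_eq_abs, abs_of_nonneg ENNReal.toReal_nonneg]
      have h1 : μ ((fun v => v + Φ (v, w)) ⁻¹' ((fun v => (v, w)) ⁻¹' s)) ≤ 1 := prob_le_one
      simpa using ENNReal.toReal_mono ENNReal.one_ne_top h1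
    calc |(∫ w, a w ∂ν) - ∫ w, b w ∂ν| = |∫ w, (a w - b w) ∂ν| := by
          rw [integral_sub haint hbint]
      _ ≤ ∫ w, |a w - b w| ∂ν := by
          simpa [Real.norm_eq_abs] using
            norm_integral_le_integral_norm (μ := ν) (fun w => a w - b w)
      _ ≤ ∫ _w, c₀ * κ ∂ν := integral_mono (haint.sub hbint).abs (integrable_const _)
            hperw
      _ = c₀ * κ := by simp
      _ ≤ (c₀ + 2) * κ := by nlinarith
end
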